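/- Addition theorem for the Poisson–Helgason kernel: for all λ ∈ ℂ, ζ ∈ S, and z, w in the open unit ball B of ℂⁿ, P_{λ,ζ}(φ_w(z)) = P_{λ,ζ}(w) · P_{λ,φ_w(ζ)}(z). -/

import Mathlib

/-!
Both sides are powers, with the same exponent, of nonnegative reals of the form
`(1 - |x|²) / |1 - ⟨x, ζ⟩|²`, and `cpow` is multiplicative on nonnegative real bases; so it
suffices to prove the identity for these bases. That follows from two identities for `φ_a`
(Rudin, *Function theory in the unit ball of ℂⁿ*, Theorem 2.2.2):
`(1 - ⟨φ_a z, φ_a u⟩)(1 - ⟨z, a⟩)(1 - ⟨a, u⟩) = (1 - |a|²)(1 - ⟨z, u⟩)`, whose case `u = z`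
computes `1 - |φ_a z|²`, and `(1 - ⟨φ_a z, u⟩)(1 - ⟨z, a⟩) = (1 - ⟨z, φ_a u⟩)(1 - ⟨a, u⟩)`,
both sides of which expand to `1 - ⟨z, a⟩ - ⟨a, u⟩ - t_a ⟨z, a⟩⟨a, u⟩ + s_a ⟨z, u⟩`, where
`s_a = √(1 - |a|²)` and `t_a = (s_a - 1)/|a|²`.
-/

open MeasureTheory Metric Complex
open scoped ENNReal Classical

noncomputable section

/-- `ℂⁿ` as a Euclidean space. -/
abbrev Cn (n : ℕ) := EuclideanSpace ℂ (Fin n)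

/-- The Hermitian product `⟨z,w⟩ = Σ z_j conj (w_j)` (linear in the first argument). -/
def herm {n : ℕ} (z w : Cn n) : ℂ := inner ℂ w z

/-- The Möbius transformation `φ_a(z) = (Q_a z + a) / (1 - ⟨z,a⟩)` of the unit ball,
with `Q_a = ((s_a - 1)/|a|²) a aᴴ - s_a I`, `s_a = (1-|a|²)^(1/2)`; for `a = 0` the
limiting value `φ_0 = -id` is used. -/
def moeb {n : ℕ} (a z : Cn n) : Cn n :=
  if a = 0 then -z
  else
    (1 - herm z a)⁻¹ •
      (((((Real.sqrt (1 - ‖a‖ ^ 2) - 1) / ‖a‖ ^ 2 : ℝ) : ℂ) * herm z a) • a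
        - ((Real.sqrt (1 - ‖a‖ ^ 2) : ℝ) : ℂ) • z + a)


instance (n : ℕ) : MeasurableSpace (Cn n) := MeasurableSpace.comap WithLp.ofLp MeasurableSpace.pi
instance (n : ℕ) : BorelSpace (Cn n) := PiLp.borelSpace 2
instance (n : ℕ) : InnerProductSpace ℝ (Cn n) := InnerProductSpace.rclikeToReal ℂ (Cn n)

/-- The Poisson–Helgason kernel `P_{λ,ζ}(z) = ((1-|z|²)/|1-⟨z,ζ⟩|²)^((n+iλ)/2)`. -/
def Pker (n : ℕ) (lam : ℂ) (ζ z : Cn n) : ℂ :=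
  (((1 - ‖z‖ ^ 2) / ‖1 - herm z ζ‖ ^ 2 : ℝ) : ℂ) ^ (((n : ℂ) + Complex.I * lam) / 2)

/-- The Möbius-invariant measure `dμ(z) = (1-|z|²)^(-n-1) dl(z)` on the open unit ball,
where `l` is the Lebesgue measure normalized so that `l(B) = 1`. -/
def ballMeasure (n : ℕ) : Measure (Cn n) :=
  ((volume : Measure (Cn n)).restrict (ball (0 : Cn n) 1)).withDensity
    fun z => ENNReal.ofReal
      ((volume (ball (0 : Cn n) 1)).toReal⁻¹ * (1 - ‖z‖ ^ 2) ^ (-(n : ℝ) - 1))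

/-- Harish-Chandra's `c`-function `c(λ) = 2^(n-iλ) Γ(n)Γ(iλ)/Γ((n+iλ)/2)²`. -/
def cFun (n : ℕ) (lam : ℂ) : ℂ :=
  (2 : ℂ) ^ ((n : ℂ) - Complex.I * lam) * Complex.Gamma (n : ℂ) * Complex.Gamma (Complex.I * lam) /
    Complex.Gamma (((n : ℂ) + Complex.I * lam) / 2) ^ 2

/-- The Plancherel measure `dν(λ,ζ) = (1/2)|c(λ)|⁻² dλ dσ(ζ)` on `B̂ = ℝ × S`. -/
def freqMeasure (n : ℕ) (σ : Measure (sphere (0 : Cn n) 1)) :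
    Measure (ℝ × sphere (0 : Cn n) 1) :=
  ((volume : Measure ℝ).withDensity
    fun lam => ENNReal.ofReal ((1 / 2) * ((‖cFun n (lam : ℂ)‖)⁻¹) ^ 2)).prod σ

/-- Time-frequency shift `ρ(z,b)ψ = P_b · (ψ ∘ φ_z)` on the ball. -/
def tfShift (n : ℕ) (z : Cn n) (b : ℝ × sphere (0 : Cn n) 1) (ψ : Cn n → ℂ) : Cn n → ℂ :=
  fun w => Pker n (b.1 : ℂ) (b.2 : Cn n) w * ψ (moeb z w)

/-- The voice transform `V_ψ f(z,b) = ⟨f, ρ(z,b)ψ⟩ = ∫ f(w) P_{-λ,ζ}(w) conj(ψ(φ_z(w))) dμ(w)`. -/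
def voice (n : ℕ) (ψ f : Cn n → ℂ) (z : Cn n) (b : ℝ × sphere (0 : Cn n) 1) : ℂ :=
  ∫ w, f w * Pker n (-(b.1 : ℂ)) (b.2 : Cn n) w * (starRingEnd ℂ) (ψ (moeb z w)) ∂(ballMeasure n)

/-- A measure on the unit sphere is unitarily invariant if it is preserved by every
unitary map of `ℂⁿ`. -/
def UnitaryInvariant {n : ℕ} (σ : Measure (sphere (0 : Cn n) 1)) : Prop :=
  ∀ U : Cn n ≃ₗᵢ[ℂ] Cn n,
    Measure.map (fun ζ : sphere (0 : Cn n) 1 =>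
      (⟨U ζ.1, by
        rw [mem_sphere_zero_iff_norm, U.norm_map]
        exact mem_sphere_zero_iff_norm.mp ζ.2⟩ : sphere (0 : Cn n) 1)) σ = σ

open scoped ComplexConjugate

variable {n : ℕ}

theorem conj_herm (z w : Cn n) : conj (herm z w) = herm w z :=
  inner_conj_symm z w

theorem conj_one_sub_herm (z w : Cn n) : conj (1 - herm z w) = 1 - herm w z := by
  rw [map_sub, map_one, conj_herm]

theorem one_sub_herm_mul_one_sub_herm (z w : Cn n) :
    (1 - herm z w) * (1 - herm w z) = (‖1 - herm z w‖ ^ 2 : ℝ) := by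
  rw [← conj_one_sub_herm z w, mul_conj, normSq_eq_norm_sq]

theorem norm_herm_le (z w : Cn n) : ‖herm z w‖ ≤ ‖z‖ * ‖w‖ := by
  rw [herm, mul_comm]
  exact norm_inner_le_norm w z

theorem one_sub_herm_ne_zero {z w : Cn n} (h : ‖z‖ * ‖w‖ < 1) : 1 - herm z w ≠ 0 := by
  rw [sub_ne_zero]
  intro h1
  have := norm_herm_le z w
  rw [← h1, norm_one] at this
  linarith

section Moebius

variable {a : Cn n}

def moebS (a : Cn n) : ℝ := Real.sqrt (1 - ‖a‖ ^ 2)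

def moebT (a : Cn n) : ℝ := (moebS a - 1) / ‖a‖ ^ 2

theorem moebS_sq (ha : ‖a‖ ≤ 1) : moebS a ^ 2 = 1 - ‖a‖ ^ 2 :=
  Real.sq_sqrt (by nlinarith [norm_nonneg a])

theorem moebT_mul_one_add_moebS (ha0 : a ≠ 0) (ha : ‖a‖ ≤ 1) :
    moebT a * (1 + moebS a) = -1 := by
  have : ‖a‖ ^ 2 ≠ 0 := by positivity
  rw [moebT, div_mul_eq_mul_div, div_eq_iff this]
  linear_combination moebS_sq ha

theorem moeb_of_ne_zero (ha0 : a ≠ 0) (z : Cn n) :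
    moeb a z = (1 - herm z a)⁻¹ •
      (((moebT a : ℂ) * herm z a) • a - (moebS a : ℂ) • z + a) := by
  rw [moeb, if_neg ha0]
  rfl

theorem herm_moeb_left (ha0 : a ≠ 0) {z : Cn n} (hz : 1 - herm z a ≠ 0) (u : Cn n) :
    (1 - herm z a) * herm (moeb a z) u
      = moebT a * herm z a * herm a u - moebS a * herm z u + herm a u := by
  rw [moeb_of_ne_zero ha0]
  simp only [herm, inner_smul_right, inner_add_right, inner_sub_right] at hz ⊢
  rw [← mul_assoc, mul_inv_cancel₀ hz, one_mul]

theorem herm_moeb_right (ha0 : a ≠ 0) {u : Cn n} (hu : 1 - herm u a ≠ 0) (z : Cn n) :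
    (1 - herm a u) * herm z (moeb a u)
      = moebT a * herm a u * herm z a - moebS a * herm z u + herm z a := by
  simpa [conj_herm] using congrArg conj (herm_moeb_left ha0 hu z)

theorem one_sub_herm_moeb_mul {z u : Cn n} (hz : 1 - herm z a ≠ 0) (hu : 1 - herm a u ≠ 0) :
    (1 - herm (moeb a z) u) * (1 - herm z a) = (1 - herm z (moeb a u)) * (1 - herm a u) := by
  rcases eq_or_ne a 0 with rfl | ha0
  · simp [moeb, herm]
  have hu' : 1 - herm u a ≠ 0 := by rwa [← conj_one_sub_herm, map_ne_zero]
  linear_combination herm_moeb_right ha0 hu' z - herm_moeb_left ha0 hz u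

theorem one_sub_herm_moeb_moeb (ha : ‖a‖ ≤ 1) {z u : Cn n} (hz : 1 - herm z a ≠ 0)
    (hu : 1 - herm a u ≠ 0) :
    (1 - herm (moeb a z) (moeb a u)) * ((1 - herm z a) * (1 - herm a u))
      = (1 - ‖a‖ ^ 2) * (1 - herm z u) := by
  rcases eq_or_ne a 0 with rfl | ha0
  · simp [moeb, herm]
  have hu' : 1 - herm u a ≠ 0 := by rwa [← conj_one_sub_herm, map_ne_zero]
  have hs : (moebS a : ℂ) ^ 2 = 1 - ‖a‖ ^ 2 := by exact_mod_cast moebS_sq ha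
  have ht : (moebT a : ℂ) * (1 + moebS a) = -1 := by
    exact_mod_cast moebT_mul_one_add_moebS ha0 ha
  have hta : (moebT a : ℂ) * ‖a‖ ^ 2 = moebS a - 1 := by
    have : ‖a‖ ^ 2 ≠ 0 := by positivity
    exact_mod_cast div_mul_cancel₀ (moebS a - 1) this
  have haa : herm a a = ‖a‖ ^ 2 := inner_self_eq_norm_sq_to_K a
  -- the terms in `⟨z, a⟩⟨a, u⟩` cancel because `t_a (1 + s_a) = -1`
  linear_combination (herm z a - 1) * herm_moeb_right ha0 hu' (moeb a z)
    - (moebT a * herm a u + 1) * herm_moeb_left ha0 hz a + moebS a * herm_moeb_left ha0 hz u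
    - (moebT a * herm a u + 1) * (moebT a * herm z a + 1) * haa
    - (moebT a * herm z a * herm a u + herm a u + herm z a) * hta
    + herm z a * herm a u * ht - herm z u * hs

theorem one_sub_norm_moeb_sq_mul (ha : ‖a‖ ≤ 1) {z : Cn n} (hz : 1 - herm z a ≠ 0) :
    (1 - ‖moeb a z‖ ^ 2) * ‖1 - herm z a‖ ^ 2 = (1 - ‖a‖ ^ 2) * (1 - ‖z‖ ^ 2) := by
  have hz' : 1 - herm a z ≠ 0 := by rwa [← conj_one_sub_herm, map_ne_zero]
  have h := one_sub_herm_moeb_moeb ha hz hz'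
  simp only [herm, inner_self_eq_norm_sq_to_K] at h
  rw [← herm, ← herm, one_sub_herm_mul_one_sub_herm] at h
  apply ofReal_injective
  push_cast at h ⊢
  linear_combination h

theorem norm_moeb_lt_one (ha : ‖a‖ < 1) {z : Cn n} (hz : ‖z‖ < 1) : ‖moeb a z‖ < 1 := by
  have hza : 1 - herm z a ≠ 0 := one_sub_herm_ne_zero (by nlinarith [norm_nonneg z, norm_nonneg a])
  have h := one_sub_norm_moeb_sq_mul ha.le hza
  have : 0 < (1 - ‖moeb a z‖ ^ 2) * ‖1 - herm z a‖ ^ 2 := by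
    rw [h]
    exact mul_pos (by nlinarith [norm_nonneg a]) (by nlinarith [norm_nonneg z])
  have := pos_of_mul_pos_left this (by positivity)
  nlinarith [norm_nonneg (moeb a z)]

end Moebius

theorem one_sub_norm_sq_div_moeb {ζ z w : Cn n} (hw : ‖w‖ ≤ 1) (hzw : 1 - herm z w ≠ 0)
    (hwζ : 1 - herm w ζ ≠ 0) (hφζ : 1 - herm (moeb w z) ζ ≠ 0) :
    (1 - ‖moeb w z‖ ^ 2) / ‖1 - herm (moeb w z) ζ‖ ^ 2
      = (1 - ‖w‖ ^ 2) / ‖1 - herm w ζ‖ ^ 2 * ((1 - ‖z‖ ^ 2) / ‖1 - herm z (moeb w ζ)‖ ^ 2) := by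
  have hnorm := one_sub_norm_moeb_sq_mul hw hzw
  have hcross := one_sub_herm_moeb_mul hzw hwζ
  have hzφζ : 1 - herm z (moeb w ζ) ≠ 0 := by
    intro h
    rw [h, zero_mul] at hcross
    exact mul_ne_zero hφζ hzw hcross
  have hcross_norm := congrArg (‖·‖ ^ 2) hcross
  simp only [norm_mul, mul_pow] at hcross_norm
  rw [div_mul_div_comm, div_eq_div_iff (by positivity) (by positivity)]
  linear_combination ‖1 - herm (moeb w z) ζ‖ ^ 2 * hnorm - (1 - ‖moeb w z‖ ^ 2) * hcross_norm

/-- Addition theorem for the Poisson–Helgason kernel: for all `λ ∈ ℂ`, `ζ ∈ S` and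
`z, w` in the open unit ball, `P_{λ,ζ}(φ_w(z)) = P_{λ,ζ}(w) · P_{λ,φ_w(ζ)}(z)`. -/
theorem Pker_addition (n : ℕ) (lam : ℂ) (ζ z w : Cn n)
    (hζ : ‖ζ‖ = 1) (hz : ‖z‖ < 1) (hw : ‖w‖ < 1) :
    Pker n lam ζ (moeb w z) = Pker n lam ζ w * Pker n lam (moeb w ζ) z := by
  have hφ : ‖moeb w z‖ < 1 := norm_moeb_lt_one hw hz
  have ne_zero_of_lt {x y : Cn n} (hx : ‖x‖ < 1) (hy : ‖y‖ ≤ 1) : 1 - herm x y ≠ 0 :=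
    one_sub_herm_ne_zero (by nlinarith [norm_nonneg x, norm_nonneg y])
  have base_nonneg {x : Cn n} (hx : ‖x‖ < 1) (d : ℝ) : 0 ≤ (1 - ‖x‖ ^ 2) / d ^ 2 :=
    div_nonneg (by nlinarith [norm_nonneg x]) (sq_nonneg d)
  rw [Pker, Pker, Pker, one_sub_norm_sq_div_moeb hw.le (ne_zero_of_lt hz hw.le)
    (ne_zero_of_lt hw hζ.le) (ne_zero_of_lt hφ hζ.le), ofReal_mul]
  exact mul_cpow_ofReal_nonneg (base_nonneg hw _) (base_nonneg hz _) _
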